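/- Let ψ : ℝ × ℝ → ℝ be smooth, positive everywhere, and suppose there is a smooth q : ℝ × ℝ → ℝ with ψₓₓ = qψ and ψ_t = 2qψₓ − qₓψ for all (t,x). Then r := ψₓ/ψ satisfies the mKdV equation r_t − 6r²rₓ + r_{xxx} = 0. -/

import Mathlib

/-- Partial derivative in the space variable. -/
noncomputable def pdx (f : ℝ → ℝ → ℝ) (t x : ℝ) : ℝ := deriv (f t) x

/-- Partial derivative in the time variable. -/
noncomputable def pdt (f : ℝ → ℝ → ℝ) (t x : ℝ) : ℝ := deriv (fun s => f s x) t

/-- The mKdV expression `r_t − 6 r² rₓ + r_{xxx}`. -/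
noncomputable def mKdVexpr (r : ℝ → ℝ → ℝ) (t x : ℝ) : ℝ :=
  pdt r t x - 6 * (r t x) ^ 2 * pdx r t x + deriv (deriv (deriv (r t))) x

section aux

variable {F : ℝ × ℝ → ℝ}

lemma aux_fderiv_apply_contDiff (hF : ContDiff ℝ (⊤ : ℕ∞) F) (v : ℝ × ℝ) :
    ContDiff ℝ (⊤ : ℕ∞) (fun p => fderiv ℝ F p v) :=
  (ContinuousLinearMap.apply ℝ ℝ v).contDiff.comp (hF.fderiv_right (by simp))

lemma aux_slice_x (hF : ContDiff ℝ (⊤ : ℕ∞) F) (t x : ℝ) :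
    HasDerivAt (fun x => F (t, x)) (fderiv ℝ F (t, x) (0, 1)) x := by
  have h := (hF.differentiable (by simp) (t, x)).hasFDerivAt.comp_hasDerivAt x
    ((hasDerivAt_const x t).prodMk (hasDerivAt_id x))
  simpa [Function.comp_def] using h

lemma aux_slice_t (hF : ContDiff ℝ (⊤ : ℕ∞) F) (t x : ℝ) :
    HasDerivAt (fun s => F (s, x)) (fderiv ℝ F (t, x) (1, 0)) t := by
  have h := (hF.differentiable (by simp) (t, x)).hasFDerivAt.comp_hasDerivAt t
    ((hasDerivAt_id t).prodMk (hasDerivAt_const t x))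
  simpa [Function.comp_def] using h

lemma aux_fderiv_apply (hF : ContDiff ℝ (⊤ : ℕ∞) F) (p v w : ℝ × ℝ) :
    fderiv ℝ (fun p => fderiv ℝ F p v) p w = fderiv ℝ (fderiv ℝ F) p w v := by
  have hd : HasFDerivAt (fderiv ℝ F) (fderiv ℝ (fderiv ℝ F) p) p :=
    (((hF.fderiv_right (m := 1) (by exact WithTop.coe_le_coe.mpr le_top)).differentiable (by simp)) p).hasFDerivAt
  have h := ((ContinuousLinearMap.apply ℝ ℝ v).hasFDerivAt.comp p hd).fderiv
  calc fderiv ℝ (fun p => fderiv ℝ F p v) p w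
      = fderiv ℝ ((ContinuousLinearMap.apply ℝ ℝ v) ∘ (fderiv ℝ F)) p w := rfl
    _ = fderiv ℝ (fderiv ℝ F) p w v := by rw [h]; rfl

lemma aux_schwarz (hF : ContDiff ℝ (⊤ : ℕ∞) F) (p : ℝ × ℝ) :
    fderiv ℝ (fun q => fderiv ℝ F q ((0:ℝ), (1:ℝ))) p (1, 0)
      = fderiv ℝ (fun q => fderiv ℝ F q ((1:ℝ), (0:ℝ))) p (0, 1) := by
  rw [aux_fderiv_apply hF, aux_fderiv_apply hF]
  exact second_derivative_symmetric
    (fun y => ((hF.differentiable (by simp)) y).hasFDerivAt)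
    (((hF.fderiv_right (m := 1) (by exact WithTop.coe_le_coe.mpr le_top)).differentiable (by simp) p).hasFDerivAt) _ _

end aux

theorem stmt6 (ψ q : ℝ → ℝ → ℝ)
    (hψ : ContDiff ℝ (⊤ : ℕ∞) (fun p : ℝ × ℝ => ψ p.1 p.2))
    (hq : ContDiff ℝ (⊤ : ℕ∞) (fun p : ℝ × ℝ => q p.1 p.2))
    (hpos : ∀ t x : ℝ, 0 < ψ t x)
    (hschroed : ∀ t x : ℝ, deriv (deriv (ψ t)) x = q t x * ψ t x)
    (hevol : ∀ t x : ℝ, pdt ψ t x = 2 * q t x * pdx ψ t x - pdx q t x * ψ t x) :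
    ∀ t x : ℝ, mKdVexpr (fun t x => pdx ψ t x / ψ t x) t x = 0 := by
  intro t x
  set R : ℝ → ℝ → ℝ := fun t x => pdx ψ t x / ψ t x with hRdef
  set f : ℝ × ℝ → ℝ := fun p => ψ p.1 p.2 with hf
  set g : ℝ × ℝ → ℝ := fun p => q p.1 p.2 with hg
  set f1 : ℝ × ℝ → ℝ := fun p => fderiv ℝ f p (0, 1) with hf1
  set g1 : ℝ × ℝ → ℝ := fun p => fderiv ℝ g p (0, 1) with hg1
  set ft : ℝ × ℝ → ℝ := fun p => fderiv ℝ f p (1, 0) with hft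
  have hf1s : ContDiff ℝ (⊤ : ℕ∞) f1 := aux_fderiv_apply_contDiff hψ _
  have hg1s : ContDiff ℝ (⊤ : ℕ∞) g1 := aux_fderiv_apply_contDiff hq _
  have hfts : ContDiff ℝ (⊤ : ℕ∞) ft := aux_fderiv_apply_contDiff hψ _
  set f2 : ℝ × ℝ → ℝ := fun p => fderiv ℝ f1 p (0, 1) with hf2
  set g2 : ℝ × ℝ → ℝ := fun p => fderiv ℝ g1 p (0, 1) with hg2
  -- basic HasDerivAt facts
  have hA : ∀ t' x', HasDerivAt (ψ t') (f1 (t', x')) x' := fun t' x' => aux_slice_x hψ t' x'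
  have hB : ∀ t' x', HasDerivAt (q t') (g1 (t', x')) x' := fun t' x' => aux_slice_x hq t' x'
  have hA1 : ∀ t' x', HasDerivAt (fun x => f1 (t', x)) (f2 (t', x')) x' :=
    fun t' x' => aux_slice_x hf1s t' x'
  have hB1 : ∀ t' x', HasDerivAt (fun x => g1 (t', x)) (g2 (t', x')) x' :=
    fun t' x' => aux_slice_x hg1s t' x'
  have hAt : ∀ t' x', HasDerivAt (fun s => f (s, x')) (ft (t', x')) t' :=
    fun t' x' => aux_slice_t hψ t' x'
  have hA1t : HasDerivAt (fun s => f1 (s, x)) (fderiv ℝ f1 (t, x) (1, 0)) t :=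
    aux_slice_t hf1s t x
  have hpdx : ∀ t' x', pdx ψ t' x' = f1 (t', x') := fun t' x' => (hA t' x').deriv
  have hpdxq : ∀ t' x', pdx q t' x' = g1 (t', x') := fun t' x' => (hB t' x').deriv
  have hderψ : ∀ t', deriv (ψ t') = fun x => f1 (t', x) := fun t' => funext fun x' => (hA t' x').deriv
  have hne : ∀ t' x', f (t', x') ≠ 0 := fun t' x' => (hpos t' x').ne'
  -- Schrödinger: f2 = g * f
  have hsch : ∀ t' x', f2 (t', x') = g (t', x') * f (t', x') := by
    intro t' x'
    have h := hschroed t' x'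
    rw [hderψ t', (hA1 t' x').deriv] at h
    exact h
  -- evolution: ft = 2 g f1 - g1 f
  have hev : ∀ t' x', ft (t', x') = 2 * g (t', x') * f1 (t', x') - g1 (t', x') * f (t', x') := by
    intro t' x'
    have h := hevol t' x'
    rw [hpdx t' x', hpdxq t' x',
      show pdt ψ t' x' = ft (t', x') from (hAt t' x').deriv] at h
    exact h
  -- R values
  have hRval : ∀ t' x', R t' x' = f1 (t', x') / f (t', x') := by
    intro t' x'; rw [hRdef]; simp only; rw [hpdx]
  -- first x-derivative of R:  rₓ = q - r²
  have hR1 : ∀ x', HasDerivAt (R t) (q t x' - R t x' ^ 2) x' := by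
    intro x'
    have base := (hA1 t x').div (hA t x') (hne t x')
    have hfun : (fun y => f1 (t, y) / f (t, y)) = R t := funext fun y => (hRval t y).symm
    change HasDerivAt (fun y => f1 (t, y) / f (t, y)) _ x' at base
    rw [hfun] at base
    convert base using 1
    rw [hsch t x', hRval t x', show ψ t x' = f (t, x') from rfl]
    have hfe : f (t, x') ≠ 0 := hne t x'
    field_simp
    ring
  have h2 : deriv (R t) = fun x' => q t x' - R t x' ^ 2 := funext fun x' => (hR1 x').deriv
  -- second x-derivative
  have hR2 : ∀ x', HasDerivAt (fun y => q t y - R t y ^ 2)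
      (g1 (t, x') - 2 * R t x' * (q t x' - R t x' ^ 2)) x' := by
    intro x'
    have base := (hB t x').sub ((hR1 x').pow 2)
    change HasDerivAt (fun y => q t y - R t y ^ 2) _ x' at base
    convert base using 1
    push_cast
    ring
  have h3 : deriv (deriv (R t)) = fun x' => g1 (t, x') - 2 * R t x' * (q t x' - R t x' ^ 2) := by
    rw [h2]; exact funext fun x' => (hR2 x').deriv
  -- third x-derivative
  have hR3 : HasDerivAt (fun y => g1 (t, y) - 2 * R t y * (q t y - R t y ^ 2))
      (g2 (t, x) - ((2 * (q t x - R t x ^ 2)) * (q t x - R t x ^ 2)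
        + (2 * R t x) * (g1 (t, x) - 2 * R t x * (q t x - R t x ^ 2)))) x := by
    exact (hB1 t x).sub (((hR1 x).const_mul 2).mul (hR2 x))
  have e_r3 : deriv (deriv (deriv (R t))) x
      = g2 (t, x) - ((2 * (q t x - R t x ^ 2)) * (q t x - R t x ^ 2)
        + (2 * R t x) * (g1 (t, x) - 2 * R t x * (q t x - R t x ^ 2))) := by
    rw [h3]; exact hR3.deriv
  -- mixed derivative via Schwarz
  have hswz : fderiv ℝ f1 (t, x) (1, 0) = fderiv ℝ ft (t, x) (0, 1) := by
    rw [hf1, hft]; exact aux_schwarz hψ (t, x)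
  have hftd : HasDerivAt (fun y => 2 * q t y * f1 (t, y) - g1 (t, y) * f (t, y))
      ((2 * g1 (t, x)) * f1 (t, x) + (2 * q t x) * f2 (t, x)
        - (g2 (t, x) * f (t, x) + g1 (t, x) * f1 (t, x))) x :=
    (((hB t x).const_mul 2).mul (hA1 t x)).sub ((hB1 t x).mul (hA t x))
  have hmix : fderiv ℝ f1 (t, x) (1, 0)
      = (2 * g1 (t, x)) * f1 (t, x) + (2 * q t x) * f2 (t, x)
        - (g2 (t, x) * f (t, x) + g1 (t, x) * f1 (t, x)) := by
    rw [hswz, ← (aux_slice_x hfts t x).deriv,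
      show (fun y => ft (t, y)) = fun y => 2 * q t y * f1 (t, y) - g1 (t, y) * f (t, y) from
        funext fun y => hev t y]
    exact hftd.deriv
  -- time derivative of R
  have hT : HasDerivAt (fun s => R s x)
      ((fderiv ℝ f1 (t, x) (1, 0) * f (t, x) - f1 (t, x) * ft (t, x)) / f (t, x) ^ 2) t := by
    have base := hA1t.div (hAt t x) (hne t x)
    have hfun : (fun s => f1 (s, x) / f (s, x)) = fun s => R s x :=
      funext fun s => (hRval s x).symm
    change HasDerivAt (fun s => f1 (s, x) / f (s, x)) _ t at base
    rwa [hfun] at base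
  have e_rt : pdt R t x
      = (fderiv ℝ f1 (t, x) (1, 0) * f (t, x) - f1 (t, x) * ft (t, x)) / f (t, x) ^ 2 := hT.deriv
  -- assemble
  have e_rx : pdx R t x = q t x - R t x ^ 2 := (hR1 x).deriv
  rw [mKdVexpr, e_rt, e_rx, e_r3, hmix, hRval t x, hev t x, hsch t x]
  have hgq : g (t, x) = q t x := rfl
  rw [hgq]
  have ha := hne t x
  field_simp
  ring
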